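/- arXiv:1104.1592 — 3 statements merged into one kernel-verified Lean document; each statement's English description precedes it below -/
import Mathlib

section
/- If R: Q_1 → ℝ is a grading on the arrows of a dimer model Q on a compact surface such that for every cycle c in Q_2 the sum of R_a over arrows a in c equals 2, and for every vertex v the sum of (1 - R_a) over all arrows with head v plus the sum of (1 - R_a) over all arrows with tail v equals 2, then the Euler characteristic χ_Q = #Q_0 - #Q_1 + #Q_2 equals 0. -/
open scoped BigOperators

attribute [local instance] Classical.propDecidable

noncomputable section

/-- The underlying data of a (possibly infinite) dimer model: a quiver together with
two distinguished collections of cyclic paths (the positive and negative faces).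
Lists of arrows are written in *algebra order*: `[a₁, …, aₖ]` represents the path
`a₁ ⋯ aₖ`, traversing `aₖ` first; so consecutive arrows satisfy `tl aᵢ = hd aᵢ₊₁`. -/
structure DimerData where
  V : Type
  E : Type
  hd : E → V
  tl : E → V
  facesP : Set (List E)
  facesM : Set (List E)

namespace DimerData

variable (D : DimerData)

def faces : Set (List D.E) := D.facesP ∪ D.facesM

/-- `p` is a path (in algebra order). -/
def IsPath (p : List D.E) : Prop := p.Chain' fun a b => D.tl a = D.hd b

/-- `p` is a path with tail `v` and head `w`. -/
def PathFrom (v w : D.V) (p : List D.E) : Prop :=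
  D.IsPath p ∧ (∀ a ∈ p.head?, D.hd a = w) ∧ (∀ a ∈ p.getLast?, D.tl a = v) ∧
    (p = [] → v = w)

/-- `c` is a nonempty cyclic path. -/
def IsCyc (c : List D.E) : Prop :=
  D.IsPath c ∧ ∃ a ∈ c.head?, ∃ b ∈ c.getLast?, D.tl b = D.hd a

/-- `c` is a cyclic path based at the vertex `v`. -/
def CycAt (v : D.V) (c : List D.E) : Prop := D.IsCyc c ∧ ∀ a ∈ c.head?, D.hd a = v

/-- The axioms of a dimer model: the faces are cyclic paths of length at least 3,
the two sets of faces are disjoint, and every arrow occurs exactly once among the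
positive faces and exactly once among the negative faces (uniqueness of the
splitting `s.1 ++ a :: s.2` expresses "exactly once in exactly one cycle"). -/
structure IsDimer : Prop where
  facesP_cyc : ∀ c ∈ D.facesP, D.IsCyc c ∧ 3 ≤ c.length
  facesM_cyc : ∀ c ∈ D.facesM, D.IsCyc c ∧ 3 ≤ c.length
  disjoint : Disjoint D.facesP D.facesM
  arrowP : ∀ a : D.E, ∃! s : List D.E × List D.E, s.1 ++ a :: s.2 ∈ D.facesP
  arrowM : ∀ a : D.E, ∃! s : List D.E × List D.E, s.1 ++ a :: s.2 ∈ D.facesM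

/-- `p` is the positive complement of the arrow `a`: `a * p` is (a rotation of)
a positive face, i.e. `r_a = p⁺ - p⁻` has `p⁺ = p`. -/
def PosComp (a : D.E) (p : List D.E) : Prop := ∃ c ∈ D.facesP, (a :: p) ~r c

/-- `p` is the negative complement of the arrow `a`. -/
def NegComp (a : D.E) (p : List D.E) : Prop := ∃ c ∈ D.facesM, (a :: p) ~r c

/-- The Euler characteristic `#Q₀ - #Q₁ + #Q₂` of a dimer model. -/
def eulerChar : ℤ := (Nat.card D.V : ℤ) - Nat.card D.E + Nat.card ↥D.faces

/-- The homology 1-chain of a path: the multiplicity of each arrow. -/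
def chain (p : List D.E) : D.E → ℤ := fun a => (p.count a : ℤ)

/-- The span of the boundaries of the faces (the image of `d : ℤ^{Q₂} → ℤ^{Q₁}`). -/
def bd2span : Submodule ℤ (D.E → ℤ) :=
  Submodule.span ℤ {x | ∃ c ∈ D.faces, x = D.chain c}

/-- The number of arrows of a path lying in a given set of arrows (the degree of
the path for the grading induced by a perfect matching). -/
def pdeg (P : Set D.E) (p : List D.E) : ℕ := p.countP fun a => decide (a ∈ P)

/-- A perfect matching: a set of arrows meeting every face exactly once. -/
def IsPM (P : Set D.E) : Prop := ∀ c ∈ D.faces, D.pdeg P c = 1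

/-- Combinatorial homotopy of paths: the congruence generated by the Jacobi
relations `p⁺ ∼ p⁻` together with contracting any face cycle to a trivial path.
Two directed paths in the dimer model are homotopic in the underlying surface
iff they are related by this relation. -/
inductive Htp : List D.E → List D.E → Prop
  | refl (p) : Htp p p
  | symm {p q} : Htp p q → Htp q p
  | trans {p q r} : Htp p q → Htp q r → Htp p r
  | append {p p' q q'} : Htp p p' → Htp q q' → Htp (p ++ q) (p' ++ q')
  | jac {a p q} : D.PosComp a p → D.NegComp a q → Htp p q
  | face {c c'} : c ∈ D.faces → c' ~r c → Htp c' []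

section Fin

variable [Fintype D.E]

/-- The boundary map `ℤ^{Q₁} → ℤ^{Q₀}`, `a ↦ h(a) - t(a)`. -/
def bd1 (x : D.E → ℤ) : D.V → ℤ := fun v =>
  (∑ a : D.E, if D.hd a = v then x a else 0) - ∑ a : D.E, if D.tl a = v then x a else 0

/-- A consistent R-charge: positive, faces of total degree 2, and the vertex
condition `Σ_{h(a)=v} (1 - R_a) + Σ_{t(a)=v} (1 - R_a) = 2`. -/
def ConsistentR (R : D.E → ℝ) : Prop :=
  (∀ a : D.E, 0 < R a) ∧
  (∀ c ∈ D.faces, (c.map R).sum = 2) ∧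
  (∀ v : D.V,
    (∑ a : D.E, if D.hd a = v then 1 - R a else 0) +
      (∑ a : D.E, if D.tl a = v then 1 - R a else 0) = 2)

end Fin

/-! ### The Jacobi algebra -/

inductive Gen (D : DimerData) : Type
  | vert : D.V → Gen D
  | arr : D.E → Gen D

/-- The free algebra on the vertices and arrows. -/
abbrev pre := FreeAlgebra ℂ (Gen D)

def genV (v : D.V) : D.pre := FreeAlgebra.ι ℂ (Gen.vert v)
def genE (a : D.E) : D.pre := FreeAlgebra.ι ℂ (Gen.arr a)

/-- The element of the free algebra corresponding to a path (in algebra order). -/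
def word (p : List D.E) : D.pre := (p.map D.genE).prod

section Alg

variable [Fintype D.V]

/-- The defining relations of the path algebra `ℂQ`: the vertices are a complete
set of orthogonal idempotents and arrows compose according to heads and tails. -/
inductive PARel : D.pre → D.pre → Prop
  | vv (v : D.V) : PARel (D.genV v * D.genV v) (D.genV v)
  | vw (v w : D.V) (h : v ≠ w) : PARel (D.genV v * D.genV w) 0
  | unit : PARel (∑ v : D.V, D.genV v) 1
  | hd (a : D.E) : PARel (D.genV (D.hd a) * D.genE a) (D.genE a)
  | tl (a : D.E) : PARel (D.genE a * D.genV (D.tl a)) (D.genE a)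

/-- The relations of the Jacobi algebra: path algebra relations together with
the relations `r_a = p⁺ - p⁻` for every arrow `a`. -/
inductive JRel : D.pre → D.pre → Prop
  | pa {x y} : D.PARel x y → JRel x y
  | jac {a p q} : D.PosComp a p → D.NegComp a q → JRel (D.word p) (D.word q)

/-- The path algebra `ℂQ`. -/
abbrev PathAlg := RingQuot D.PARel

/-- The Jacobi algebra `A_Q` of the dimer model. -/
abbrev Jac := RingQuot D.JRel

def toJac : D.pre →+* D.Jac := RingQuot.mkRingHom D.JRel

/-- The element of the Jacobi algebra given by a (nonempty) path. -/
def pathE (p : List D.E) : D.Jac := D.toJac (D.word p)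

/-- The idempotent of a vertex in the Jacobi algebra. -/
def vtx (v : D.V) : D.Jac := D.toJac (D.genV v)

/-- The element of a possibly trivial path with tail vertex `v`. -/
def pathAt (v : D.V) (p : List D.E) : D.Jac := if p = [] then D.vtx v else D.pathE p

/-- `A_Q` is a cancellation algebra: `p a = q a → p = q` and `a p = a q → p = q`
for every arrow `a` and all paths `p`, `q` (with matching heads and tails). -/
def Cancellation : Prop :=
  ∀ (a : D.E) (p q : List D.E) (v : D.V),
    (D.PathFrom (D.hd a) v p → D.PathFrom (D.hd a) v q →
      D.pathAt (D.hd a) p * D.pathE [a] = D.pathAt (D.hd a) q * D.pathE [a] →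
      D.pathAt (D.hd a) p = D.pathAt (D.hd a) q) ∧
    (D.PathFrom v (D.tl a) p → D.PathFrom v (D.tl a) q →
      D.pathE [a] * D.pathAt v p = D.pathE [a] * D.pathAt v q →
      D.pathAt v p = D.pathAt v q)

/-- A choice, for every vertex, of a face cycle based at that vertex. -/
def CycChoice (c : D.V → List D.E) : Prop :=
  ∀ v : D.V, c v ∈ D.faces ∧ D.CycAt v (c v)

/-- The canonical central element `ℓ = Σ_v c_v` attached to a choice of cycles. -/
def ell (c : D.V → List D.E) : D.Jac := ∑ v : D.V, D.pathE (c v)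

end Alg

end DimerData

/-! Summing the vertex condition over all vertices counts every arrow once at its head and once
at its tail, so `#Q₀ = #Q₁ - Σₐ Rₐ`. Every arrow lies at exactly one position of exactly one
positive face, so summing `R` face by face gives `Σₐ Rₐ = 2 #Q₂⁺`, and likewise `Σₐ Rₐ = 2 #Q₂⁻`.
Hence `#Q₂ = Σₐ Rₐ` and the Euler characteristic vanishes. -/

section UniqueSplit

variable {E : Type*} {S : Set (List E)}

def positionEquiv (hS : ∀ a : E, ∃! s : List E × List E, s.1 ++ a :: s.2 ∈ S) :
    (Σ c : S, Fin c.1.length) ≃ E :=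
  Equiv.ofBijective (fun p => p.1.1[p.2.1]) <| by
    have hsplit : ∀ (l : List E) (i : Fin l.length), l.take i ++ l[i.1] :: l.drop (i + 1) = l :=
      fun l i => by rw [List.cons_getElem_drop_succ, List.take_append_drop]
    refine ⟨?_, fun a => ?_⟩
    · rintro ⟨⟨l, hl⟩, i⟩ ⟨⟨l', hl'⟩, j⟩ (h : l[i.1] = l'[j.1])
      have hij := (hS l[i.1]).unique (y₁ := (l.take i, l.drop (i + 1)))
        (y₂ := (l'.take j, l'.drop (j + 1))) ((hsplit l i).symm ▸ hl)
        (h ▸ (hsplit l' j).symm ▸ hl')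
      obtain ⟨htake, hdrop⟩ := Prod.mk.inj hij
      obtain rfl : l = l' := by rw [← hsplit l i, ← hsplit l' j, htake, hdrop, h]
      obtain rfl : i = j := Fin.ext <| by simpa [i.2.le, j.2.le] using congrArg List.length htake
      rfl
    · obtain ⟨⟨s, t⟩, hst, -⟩ := hS a
      exact ⟨⟨⟨s ++ a :: t, hst⟩, ⟨s.length, by simp⟩⟩, by simp⟩

lemma finite_of_existsUnique_split [Finite E]
    (hS : ∀ a : E, ∃! s : List E × List E, s.1 ++ a :: s.2 ∈ S) (hnil : [] ∉ S) :
    S.Finite :=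
  Set.finite_coe_iff.mp <| Finite.of_injective
    (fun c : S => positionEquiv hS
      ⟨c, ⟨0, List.length_pos_iff.mpr (ne_of_mem_of_not_mem c.2 hnil)⟩⟩)
    fun _ _ h => congrArg Sigma.fst ((positionEquiv hS).injective h)

lemma sum_eq_ncard_smul_of_existsUnique_split {M : Type*} [AddCommMonoid M] [Fintype E]
    (hS : ∀ a : E, ∃! s : List E × List E, s.1 ++ a :: s.2 ∈ S) (hfin : S.Finite)
    (f : E → M) (k : M) (hf : ∀ c ∈ S, (c.map f).sum = k) :
    ∑ a, f a = S.ncard • k := by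
  have := hfin.fintype
  calc ∑ a, f a = ∑ c : S, ∑ i : Fin c.1.length, f c.1[i.1] := by
        rw [← (positionEquiv hS).sum_comp, Fintype.sum_sigma]; rfl
    _ = ∑ _c : S, k := by
        simp only [Fin.sum_univ_fun_getElem]
        exact Finset.sum_congr rfl fun c _ => hf c c.2
    _ = S.ncard • k := by
        rw [Finset.sum_const, Finset.card_univ, ← Nat.card_eq_fintype_card, Nat.card_coe_set_eq]

end UniqueSplit

namespace DimerData

variable (D : DimerData) [Fintype D.E]

lemma natCard_V_eq_natCard_E_sub_sum [Fintype D.V] (R : D.E → ℝ)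
    (hvert : ∀ v : D.V,
      (∑ a : D.E, if D.hd a = v then 1 - R a else 0) +
        (∑ a : D.E, if D.tl a = v then 1 - R a else 0) = 2) :
    (Nat.card D.V : ℝ) = Nat.card D.E - ∑ a, R a := by
  have hfibre (f : D.E → D.V) :
      ∑ v, ∑ a, (if f a = v then 1 - R a else 0) = ∑ a, (1 - R a) := by
    rw [Finset.sum_comm]
    simp only [Finset.sum_ite_eq, Finset.mem_univ, if_true]
  have h : ∑ _v : D.V, (2 : ℝ) = ∑ a, (1 - R a) + ∑ a, (1 - R a) := by
    rw [← Finset.sum_congr rfl fun v _ => hvert v, Finset.sum_add_distrib, hfibre, hfibre]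
  simp only [Finset.sum_sub_distrib, Finset.sum_const, Finset.card_univ, nsmul_eq_mul, mul_one,
    ← Nat.card_eq_fintype_card] at h
  linarith

lemma natCard_faces_eq_sum (hD : D.IsDimer) (R : D.E → ℝ)
    (hface : ∀ c ∈ D.faces, (c.map R).sum = 2) :
    (Nat.card D.faces : ℝ) = ∑ a, R a := by
  have hnil : [] ∉ D.faces := fun h => by simpa using hface [] h
  have hPfin := finite_of_existsUnique_split hD.arrowP fun h => hnil (Or.inl h)
  have hMfin := finite_of_existsUnique_split hD.arrowM fun h => hnil (Or.inr h)
  have hP := sum_eq_ncard_smul_of_existsUnique_split hD.arrowP hPfin R 2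
    fun c hc => hface c (Or.inl hc)
  have hM := sum_eq_ncard_smul_of_existsUnique_split hD.arrowM hMfin R 2
    fun c hc => hface c (Or.inr hc)
  rw [Nat.card_coe_set_eq, faces, Set.ncard_union_eq hD.disjoint hPfin hMfin]
  rw [nsmul_eq_mul] at hP hM
  push_cast
  linarith

end DimerData

open DimerData in
/-- If a dimer model on a compact surface carries a grading
`R : Q₁ → ℝ` with all faces of total degree `2` and satisfying the vertex
condition, then its Euler characteristic `#Q₀ - #Q₁ + #Q₂` vanishes. -/
theorem euler_char_eq_zero_of_R_charge (D : DimerData) [Fintype D.V] [Fintype D.E]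
    (hD : D.IsDimer) (R : D.E → ℝ)
    (hface : ∀ c ∈ D.faces, (c.map R).sum = 2)
    (hvert : ∀ v : D.V,
      (∑ a : D.E, if D.hd a = v then 1 - R a else 0) +
        (∑ a : D.E, if D.tl a = v then 1 - R a else 0) = 2) :
    D.eulerChar = 0 := by
  have hV := D.natCard_V_eq_natCard_E_sub_sum R hvert
  have hF := D.natCard_faces_eq_sum hD R hface
  have : (D.eulerChar : ℝ) = 0 := by
    rw [eulerChar]
    push_cast
    linarith
  exact_mod_cast this
end
end

section
/- Let Q be a dimer model on a torus admitting a consistent R-charge such that A_Q is cancellation, let P be a perfect matching, and let p, q be cyclic paths in Q whose homology classes in H_1(torus) are opposite. Then P meets p or P meets q, i.e. deg_P(p) > 0 or deg_P(q) > 0. -/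
open scoped BigOperators

attribute [local instance] Classical.propDecidable

noncomputable section

section Aux

variable (D : DimerData) [Fintype D.E] (R : D.E → ℝ) (P : Set D.E)

lemma aux_chain_R_sum (c : List D.E) :
    ∑ a : D.E, R a * ((D.chain c) a : ℝ) = (c.map R).sum := by
  induction c with
  | nil => simp [DimerData.chain]
  | cons b t ih =>
    simp only [DimerData.chain, List.count_cons, List.map_cons, List.sum_cons,
      beq_iff_eq] at *
    push_cast [DimerData.chain] at ih ⊢
    have : ∀ a : D.E, R a * ((t.count a : ℝ) + if b = a then 1 else 0)
        = R a * (t.count a : ℝ) + (if b = a then R a else 0) := by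
      intro a; split <;> ring
    rw [Finset.sum_congr rfl fun a _ => this a, Finset.sum_add_distrib, ih,
      Finset.sum_ite_eq Finset.univ b R]
    simp [add_comm]

lemma aux_chain_P_sum (c : List D.E) :
    ∑ a : D.E, (if a ∈ P then (D.chain c) a else 0) = (D.pdeg P c : ℤ) := by
  induction c with
  | nil => simp [DimerData.chain, DimerData.pdeg]
  | cons b t ih =>
    simp only [DimerData.chain, List.count_cons, DimerData.pdeg, List.countP_cons,
      beq_iff_eq] at *
    push_cast
    have : ∀ a : D.E, (if a ∈ P then ((t.count a : ℤ) + if b = a then 1 else 0) else 0)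
        = (if a ∈ P then (t.count a : ℤ) else 0)
            + (if b = a then (if a ∈ P then (1:ℤ) else 0) else 0) := by
      intro a
      by_cases h' : b = a
      · subst h'; by_cases h : b ∈ P <;> simp [h]
      · simp [h']
    rw [Finset.sum_congr rfl fun a _ => this a, Finset.sum_add_distrib, ih,
      Finset.sum_ite_eq Finset.univ b (fun a => if a ∈ P then (1:ℤ) else 0)]
    by_cases hb : b ∈ P <;> simp [hb, decide_eq_true_eq]

/-- The ℤ-linear functional `x ↦ Σ R(a)·x(a) − 2·Σ_{a∈P} x(a)`. -/
def auxL : (D.E → ℤ) →ₗ[ℤ] ℝ where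
  toFun x := (∑ a : D.E, R a * (x a : ℝ))
      - 2 * ((∑ a : D.E, (if a ∈ P then x a else 0) : ℤ) : ℝ)
  map_add' x y := by
    have h1 : ∀ a : D.E, (if a ∈ P then x a + y a else 0)
        = (if a ∈ P then x a else 0) + (if a ∈ P then y a else 0) := by
      intro a; split <;> simp
    simp only [Pi.add_apply]
    rw [Finset.sum_congr rfl fun a _ => h1 a, Finset.sum_add_distrib]
    push_cast
    rw [Finset.sum_congr rfl (fun a (_ : a ∈ Finset.univ) => by
      rw [mul_add] : ∀ a ∈ Finset.univ, R a * ((x a : ℝ) + (y a : ℝ))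
        = R a * (x a : ℝ) + R a * (y a : ℝ)), Finset.sum_add_distrib]
    ring
  map_smul' n x := by
    have h1 : ∀ a : D.E, (if a ∈ P then n * x a else 0)
        = n * (if a ∈ P then x a else 0) := by
      intro a; split <;> simp
    simp only [Pi.smul_apply, smul_eq_mul, RingHom.id_apply]
    rw [Finset.sum_congr rfl fun a _ => h1 a, ← Finset.mul_sum]
    push_cast
    rw [Finset.sum_congr rfl (fun a (_ : a ∈ Finset.univ) => by
      ring : ∀ a ∈ Finset.univ, R a * ((n : ℝ) * (x a : ℝ))
        = (n : ℝ) * (R a * (x a : ℝ))), ← Finset.mul_sum, zsmul_eq_mul]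
    ring

end Aux

open DimerData in
/-- On a torus (`χ = 0`), if the Jacobi algebra is cancellation
and admits a consistent R-charge, `P` is a perfect matching and `p`, `q` are
cyclic paths with opposite homology classes, then `P` meets `p` or `P` meets `q`. -/
theorem matching_meets_opposite_cycles (D : DimerData) [Fintype D.V] [Fintype D.E]
    (hD : D.IsDimer) (hχ : D.eulerChar = 0) (hc : D.Cancellation)
    (R : D.E → ℝ) (hR : D.ConsistentR R) (P : Set D.E) (hP : D.IsPM P)
    (p q : List D.E) (hp : D.IsCyc p) (hq : D.IsCyc q)
    (hopp : D.chain p + D.chain q ∈ D.bd2span) :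
    0 < D.pdeg P p ∨ 0 < D.pdeg P q := by
  -- the functional vanishes on face chains, hence on the span
  have hker : D.bd2span ≤ LinearMap.ker (auxL D R P) := by
    rw [DimerData.bd2span, Submodule.span_le]
    rintro x ⟨c, hcf, rfl⟩
    simp only [SetLike.mem_coe, LinearMap.mem_ker, auxL, LinearMap.coe_mk, AddHom.coe_mk]
    rw [aux_chain_R_sum, aux_chain_P_sum, hR.2.1 c hcf, hP c hcf]
    norm_num
  have h0 : auxL D R P (D.chain p + D.chain q) = 0 := hker hopp
  simp only [auxL, LinearMap.coe_mk, AddHom.coe_mk, Pi.add_apply] at h0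
  have hRsplit : ∀ a : D.E, R a * (((D.chain p) a + (D.chain q) a : ℤ) : ℝ)
      = R a * ((D.chain p) a : ℝ) + R a * ((D.chain q) a : ℝ) := by
    intro a; push_cast; ring
  have hPsplit : ∀ a : D.E, (if a ∈ P then (D.chain p) a + (D.chain q) a else 0)
      = (if a ∈ P then (D.chain p) a else 0) + (if a ∈ P then (D.chain q) a else 0) := by
    intro a; split <;> simp
  rw [Finset.sum_congr rfl fun a _ => hRsplit a, Finset.sum_add_distrib,
    Finset.sum_congr rfl fun a _ => hPsplit a, Finset.sum_add_distrib,
    aux_chain_R_sum, aux_chain_R_sum, aux_chain_P_sum, aux_chain_P_sum] at h0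
  -- positivity of the R-sums over the nonempty cycles p and q
  have hpos : ∀ c : List D.E, D.IsCyc c → 0 < (c.map R).sum := by
    rintro c ⟨-, a, ha, -⟩
    have hne : c ≠ [] := by
      rintro rfl; simp at ha
    refine List.sum_pos _ (fun x hx => ?_) (by simpa using hne)
    obtain ⟨b, -, rfl⟩ := List.mem_map.1 hx
    exact hR.1 b
  by_contra hcon
  push_neg at hcon
  have hp0 : D.pdeg P p = 0 := Nat.le_zero.1 hcon.1
  have hq0 : D.pdeg P q = 0 := Nat.le_zero.1 hcon.2
  rw [hp0, hq0] at h0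
  have := add_pos (hpos p hp) (hpos q hq)
  push_cast at h0
  linarith
end
end

section
/- Let Q be a dimer model embedded in the plane with isoradial cycles (each face cycle inscribed in a unit circle, each arrow a subtending an arc of π·R_a radians) coming from a consistent R-charge. For a direction θ, let P_θ^+ be the set of arrows a such that the ray from the center of the positive cycle containing a in direction θ hits a but not in its head. Then P_θ^+ is a perfect matching: every cycle in Q_2 (both positive and negative) contains exactly one arrow of P_θ^+. -/
open scoped BigOperators

attribute [local instance] Classical.propDecidable

noncomputable section

namespace DimerData

/-- A realization of a (planar) dimer model with isoradial cycles coming from an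
R-charge `R`: every face is a polygon inscribed in a unit circle around its
center, positive faces anticlockwise and negative faces clockwise, with each
arrow `a` standing on an arc of `π R_a` radians. -/
structure Isoradial (D : DimerData) (R : D.E → ℝ) where
  pos : D.V → ℂ
  ctrP : List D.E → ℂ
  ctrM : List D.E → ℂ
  unitP : ∀ c ∈ D.facesP, ∀ a ∈ c, ‖pos (D.tl a) - ctrP c‖ = 1
  unitM : ∀ c ∈ D.facesM, ∀ a ∈ c, ‖pos (D.tl a) - ctrM c‖ = 1
  arcP : ∀ c ∈ D.facesP, ∀ a ∈ c,
    pos (D.hd a) - ctrP c =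
      Complex.exp (((Real.pi * R a : ℝ) : ℂ) * Complex.I) * (pos (D.tl a) - ctrP c)
  arcM : ∀ c ∈ D.facesM, ∀ a ∈ c,
    pos (D.hd a) - ctrM c =
      Complex.exp (-((Real.pi * R a : ℝ) : ℂ) * Complex.I) * (pos (D.tl a) - ctrM c)

/-- The set `P_θ⁺` of arrows `a` such that the ray from the center of the
positive face of `a` in direction `θ` hits `a`, but not in its head: the
direction `θ` lies on the arc going anticlockwise from the tail of `a`
(inclusive) to the head of `a` (exclusive). -/
def PosMatch (D : DimerData) {R : D.E → ℝ} (emb : Isoradial D R) (θ : ℝ) : Set D.E :=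
  {a | ∃ c ∈ D.facesP, a ∈ c ∧ ∃ s : ℝ, 0 ≤ s ∧ s < Real.pi * R a ∧
    Complex.exp ((θ : ℂ) * Complex.I) =
      Complex.exp ((s : ℂ) * Complex.I) * (emb.pos (D.tl a) - emb.ctrP c)}

end DimerData

/-!
Around its centre, the arrows of a face cut the circumscribed unit circle into consecutive
half-open arcs of angles `π R_a`, which add up to `2π`; hence every direction lies on exactly one
of them. For a positive face this is the definition of `P_θ⁺`. For an arrow `a` of a
negative face, the two centres of the faces of `a` and the two endpoints of `a` form a rhombus
(because `0 < R_a < 2`), so the direction `θ` seen from the positive centre at the tail of `a` is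
the direction `θ + π` seen from the negative centre at the head of `a`, and the same partition
argument applies to the negative face, whose arcs run anticlockwise from head to tail.
-/

open Complex
open scoped Real

def OnArc (z : ℂ) (L : ℝ) (w : ℂ) : Prop :=
  ∃ s : ℝ, 0 ≤ s ∧ s < L ∧ w = exp (s * I) * z

theorem Complex.eq_of_exp_mul_I_eq_exp_mul_I {x y : ℝ} (h : exp (x * I) = exp (y * I))
    (hxy : |x - y| < 2 * π) : x = y := by
  obtain ⟨n, hn⟩ := exp_eq_exp_iff_exists_int.1 h
  have hsub : x - y = n * (2 * π) := by
    linarith [show x = y + n * (2 * π) by simpa using congrArg im hn]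
  have hn1 : |(n : ℝ)| < 1 := by
    rw [hsub, abs_mul, abs_of_pos Real.two_pi_pos] at hxy
    nlinarith [Real.two_pi_pos]
  have hn0 : n = 0 := Int.abs_lt_one_iff.1 (by exact_mod_cast hn1)
  simp only [hn0, Int.cast_zero, zero_mul] at hsub
  linarith

theorem onArc_neg_iff {z w : ℂ} {L : ℝ} : OnArc (-z) L (-w) ↔ OnArc z L w := by
  simp only [OnArc, mul_neg, neg_inj]

theorem onArc_add_iff {z w : ℂ} {L₁ L₂ : ℝ} (hL₁ : 0 ≤ L₁) (hL₂ : 0 ≤ L₂) :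
    OnArc z (L₁ + L₂) w ↔ OnArc z L₁ w ∨ OnArc (exp (L₁ * I) * z) L₂ w := by
  constructor
  · rintro ⟨s, hs0, hsL, rfl⟩
    by_cases hs : s < L₁
    · exact Or.inl ⟨s, hs0, hs, rfl⟩
    · refine Or.inr ⟨s - L₁, by linarith, by linarith, ?_⟩
      rw [← mul_assoc, ← exp_add]
      push_cast
      ring_nf
  · rintro (⟨s, hs0, hsL, rfl⟩ | ⟨t, ht0, htL, rfl⟩)
    · exact ⟨s, hs0, by linarith, rfl⟩
    · refine ⟨L₁ + t, by linarith, by linarith, ?_⟩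
      rw [← mul_assoc, ← exp_add]
      push_cast
      ring_nf

theorem not_onArc_and_onArc {z w : ℂ} {L₁ L₂ : ℝ} (hz : z ≠ 0) (hL : L₁ + L₂ ≤ 2 * π) :
    ¬ (OnArc z L₁ w ∧ OnArc (exp (L₁ * I) * z) L₂ w) := by
  rintro ⟨⟨s, hs0, hsL, rfl⟩, ⟨t, ht0, htL, h⟩⟩
  rw [← mul_assoc, ← exp_add] at h
  replace h := mul_right_cancel₀ hz h
  have hst : s = t + L₁ :=
    eq_of_exp_mul_I_eq_exp_mul_I (by rw [h]; push_cast; ring_nf)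
      (abs_lt.2 ⟨by linarith, by linarith⟩)
  linarith

theorem onArc_two_pi {z w : ℂ} (hz : ‖z‖ = 1) (hw : ‖w‖ = 1) : OnArc z (2 * π) w := by
  set φ := (w / z).arg
  set s := toIcoMod Real.two_pi_pos 0 φ
  obtain ⟨hs0, hs⟩ := toIcoMod_mem_Ico Real.two_pi_pos 0 φ
  have hz0 : z ≠ 0 := norm_ne_zero_iff.1 (by rw [hz]; exact one_ne_zero)
  refine ⟨s, hs0, by simpa using hs, ?_⟩
  have hexp : exp (φ * I) = exp (s * I) := by
    refine exp_eq_exp_iff_exists_int.2 ⟨toIcoDiv Real.two_pi_pos 0 φ, ?_⟩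
    have hdiff : (φ - s : ℂ) = toIcoDiv Real.two_pi_pos 0 φ * (2 * π) := by
      exact_mod_cast self_sub_toIcoMod_eq_mul Real.two_pi_pos 0 φ
    linear_combination I * hdiff
  have := norm_mul_exp_arg_mul_I (w / z)
  rw [norm_div, hz, hw, div_one, ofReal_one, one_mul, hexp] at this
  rw [this, div_mul_cancel₀ w hz0]

section Arcs

variable {ι : Type*} {f g : ι → ℂ} {α : ι → ℝ} {w : ℂ}

theorem countP_onArc_eq_ite {l : List ι} (hα : ∀ a ∈ l, 0 ≤ α a)
    (hsum : (l.map α).sum ≤ 2 * π) (hf : ∀ a ∈ l, f a ≠ 0)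
    (hg : ∀ a ∈ l, g a = exp (α a * I) * f a) (hchain : l.IsChain fun a b => g a = f b)
    {z : ℂ} (hz : ∀ a ∈ l.head?, f a = z) :
    l.countP (fun a => OnArc (f a) (α a) w) = if OnArc z (l.map α).sum w then 1 else 0 := by
  induction l generalizing z with
  | nil =>
    rw [List.countP_nil, List.map_nil, List.sum_nil, if_neg]
    rintro ⟨s, hs0, hs, -⟩
    linarith
  | cons a l ih =>
    simp only [List.mem_cons, forall_eq_or_imp] at hα hf hg
    simp only [List.map_cons, List.sum_cons] at hsum ⊢
    obtain ⟨hchain_head, hchain⟩ := List.isChain_cons.1 hchain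
    obtain rfl : f a = z := hz a rfl
    have hl : 0 ≤ (l.map α).sum := List.sum_nonneg (List.forall_mem_map.2 hα.2)
    have hrest := ih hα.2 (by linarith) hf.2 hg.2 hchain
      (z := exp (α a * I) * f a) fun b hb => hg.1 ▸ (hchain_head b hb).symm
    have hdisj := not_onArc_and_onArc (w := w) hf.1 hsum
    rw [List.countP_cons, hrest, onArc_add_iff hα.1 hl]
    by_cases h₁ : OnArc (f a) (α a) w <;>
      by_cases h₂ : OnArc (exp (α a * I) * f a) (l.map α).sum w <;> simp_all

theorem existsUnique_mem_onArc {l : List ι} (hl : l ≠ []) (hα : ∀ a ∈ l, 0 ≤ α a)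
    (hsum : (l.map α).sum = 2 * π) (hf : ∀ a ∈ l, ‖f a‖ = 1)
    (hg : ∀ a ∈ l, g a = exp (α a * I) * f a) (hchain : l.IsChain fun a b => g a = f b)
    (hw : ‖w‖ = 1) :
    ∃! a, a ∈ l ∧ OnArc (f a) (α a) w := by
  obtain ⟨a₀, l₀, rfl⟩ := List.exists_cons_of_ne_nil hl
  have hcount := countP_onArc_eq_ite (w := w) hα hsum.le
    (fun a ha => norm_ne_zero_iff.1 (by rw [hf a ha]; exact one_ne_zero)) hg hchain
    (z := f a₀) fun a ha => by cases ha; rfl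
  rw [hsum, if_pos (onArc_two_pi (hf a₀ List.mem_cons_self) hw), List.countP_eq_length_filter,
    List.length_eq_one_iff] at hcount
  obtain ⟨b, hb⟩ := hcount
  have hmem : ∀ a, a ∈ a₀ :: l₀ ∧ OnArc (f a) (α a) w ↔ a = b := fun a => by
    rw [← List.mem_singleton, ← hb, List.mem_filter, decide_eq_true_iff]
  exact ⟨b, (hmem b).2 rfl, fun a ha => (hmem a).1 ha⟩

end Arcs

theorem List.lt_sum_of_mem {l : List ℝ} (hpos : ∀ x ∈ l, 0 < x) (hlen : 2 ≤ l.length) {x : ℝ}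
    (hx : x ∈ l) : x < l.sum := by
  have hrest : l.erase x ≠ [] := by
    rw [← List.length_pos_iff, List.length_erase_of_mem hx]
    omega
  rw [← List.sum_erase hx, lt_add_iff_pos_right]
  exact List.sum_pos _ (fun y hy => hpos y (List.mem_of_mem_erase hy)) hrest

theorem Complex.add_eq_add_of_rotate {e t h P M : ℂ} (he₀ : e ≠ 0) (he₁ : e ≠ 1)
    (hP : h - P = e * (t - P)) (hM : h - M = e⁻¹ * (t - M)) : P + M = t + h := by
  have hsub : e - 1 ≠ 0 := sub_ne_zero.2 he₁
  have hee : e * e⁻¹ = 1 := mul_inv_cancel₀ he₀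
  refine mul_left_cancel₀ hsub ?_
  linear_combination hP - e * hM - (t - M) * hee

namespace DimerData

variable {D : DimerData}

theorem IsDimer.exists_mem_facesP (hD : D.IsDimer) (a : D.E) : ∃ c ∈ D.facesP, a ∈ c := by
  obtain ⟨⟨s, t⟩, hst, -⟩ := hD.arrowP a
  exact ⟨s ++ a :: t, hst, by simp⟩

theorem IsDimer.eq_of_mem_facesP (hD : D.IsDimer) {a : D.E} {c c' : List D.E}
    (hc : c ∈ D.facesP) (hc' : c' ∈ D.facesP) (ha : a ∈ c) (ha' : a ∈ c') : c = c' := by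
  obtain ⟨s, t, rfl⟩ := List.append_of_mem ha
  obtain ⟨s', t', rfl⟩ := List.append_of_mem ha'
  obtain ⟨p, -, huniq⟩ := hD.arrowP a
  have hsplit := (huniq (s, t) hc).trans (huniq (s', t') hc').symm
  simp only [Prod.mk.injEq] at hsplit
  rw [hsplit.1, hsplit.2]

theorem IsDimer.lt_two_of_mem_facesP (hD : D.IsDimer) {R : D.E → ℝ} (hpos : ∀ a, 0 < R a)
    (hface : ∀ c ∈ D.faces, (c.map R).sum = 2) {a : D.E} {c : List D.E} (hc : c ∈ D.facesP)
    (ha : a ∈ c) : R a < 2 := by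
  have hlen := (hD.facesP_cyc c hc).2
  rw [← hface c (Or.inl hc)]
  exact List.lt_sum_of_mem (List.forall_mem_map.2 fun b _ => hpos b)
    (by rw [List.length_map]; omega) (List.mem_map_of_mem ha)

theorem sum_map_pi_mul_eq_two_pi {R : D.E → ℝ} (hface : ∀ c ∈ D.faces, (c.map R).sum = 2)
    {c : List D.E} (hc : c ∈ D.faces) : (c.map fun a => π * R a).sum = 2 * π := by
  rw [List.sum_map_mul_left, hface c hc, mul_comm]

namespace Isoradial

variable {R : D.E → ℝ} (emb : Isoradial D R)

theorem tl_sub_ctrM {c : List D.E} (hc : c ∈ D.facesM) {a : D.E} (ha : a ∈ c) :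
    emb.pos (D.tl a) - emb.ctrM c =
      exp ((π * R a : ℝ) * I) * (emb.pos (D.hd a) - emb.ctrM c) := by
  rw [emb.arcM c hc a ha, ← mul_assoc, ← exp_add, neg_mul, add_neg_cancel, exp_zero, one_mul]

theorem norm_hd_sub_ctrM {c : List D.E} (hc : c ∈ D.facesM) {a : D.E} (ha : a ∈ c) :
    ‖emb.pos (D.hd a) - emb.ctrM c‖ = 1 := by
  rw [emb.arcM c hc a ha, norm_mul, ← ofReal_neg, norm_exp_ofReal_mul_I,
    emb.unitM c hc a ha, one_mul]

theorem ctrP_add_ctrM (hD : D.IsDimer) (hpos : ∀ a, 0 < R a)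
    (hface : ∀ c ∈ D.faces, (c.map R).sum = 2) {a : D.E} {c c' : List D.E}
    (hc : c ∈ D.facesP) (ha : a ∈ c) (hc' : c' ∈ D.facesM) (ha' : a ∈ c') :
    emb.ctrP c + emb.ctrM c' = emb.pos (D.tl a) + emb.pos (D.hd a) := by
  have hangle_pos : 0 < π * R a := mul_pos Real.pi_pos (hpos a)
  have hangle_lt : π * R a < 2 * π := by
    nlinarith [Real.pi_pos, hD.lt_two_of_mem_facesP hpos hface hc ha]
  have hne : exp ((π * R a : ℝ) * I) ≠ 1 := fun h =>
    hangle_pos.ne' <| eq_of_exp_mul_I_eq_exp_mul_I (y := 0) (by simpa using h)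
      (by rwa [sub_zero, abs_of_pos hangle_pos])
  refine add_eq_add_of_rotate (exp_ne_zero _) hne (emb.arcP c hc a ha) ?_
  rw [emb.arcM c' hc' a ha', ← exp_neg, neg_mul]

end Isoradial

theorem mem_posMatch_iff_of_mem_facesP (hD : D.IsDimer) {R : D.E → ℝ} (emb : Isoradial D R)
    (θ : ℝ) {a : D.E} {c : List D.E} (hc : c ∈ D.facesP) (ha : a ∈ c) :
    a ∈ D.PosMatch emb θ ↔ OnArc (emb.pos (D.tl a) - emb.ctrP c) (π * R a) (exp (θ * I)) := by
  refine ⟨?_, fun h => ⟨c, hc, ha, h⟩⟩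
  rintro ⟨c', hc', ha', h⟩
  rwa [hD.eq_of_mem_facesP hc' hc ha' ha] at h

theorem mem_posMatch_iff_of_mem_facesM (hD : D.IsDimer) {R : D.E → ℝ} (hpos : ∀ a, 0 < R a)
    (hface : ∀ c ∈ D.faces, (c.map R).sum = 2) (emb : Isoradial D R) (θ : ℝ) {a : D.E}
    {c : List D.E} (hc : c ∈ D.facesM) (ha : a ∈ c) :
    a ∈ D.PosMatch emb θ ↔ OnArc (emb.pos (D.hd a) - emb.ctrM c) (π * R a) (-exp (θ * I)) := by
  obtain ⟨c', hc', ha'⟩ := hD.exists_mem_facesP a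
  have hctr : emb.ctrP c' - emb.pos (D.tl a) = emb.pos (D.hd a) - emb.ctrM c := by
    linear_combination emb.ctrP_add_ctrM hD hpos hface hc' ha' hc ha
  rw [mem_posMatch_iff_of_mem_facesP hD emb θ hc' ha', ← onArc_neg_iff, neg_sub, hctr]

end DimerData

open DimerData in
/-- For a dimer model embedded with isoradial cycles and any
direction `θ`, the set `P_θ⁺` is a perfect matching: every face (positive and
negative) contains exactly one arrow of `P_θ⁺`. -/
theorem posMatch_isPM (D : DimerData) (hD : D.IsDimer) (R : D.E → ℝ)
    (hpos : ∀ a : D.E, 0 < R a) (hface : ∀ c ∈ D.faces, (c.map R).sum = 2)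
    (emb : Isoradial D R) (θ : ℝ) :
    ∀ c ∈ D.faces, ∃! a : D.E, a ∈ c ∧ a ∈ PosMatch D emb θ := by
  intro c hc
  have hα : ∀ a ∈ c, 0 ≤ π * R a := fun a _ => (mul_pos Real.pi_pos (hpos a)).le
  have hsum := sum_map_pi_mul_eq_two_pi hface hc
  have hw : ‖exp (θ * I)‖ = 1 := norm_exp_ofReal_mul_I θ
  rcases hc with hcP | hcM
  · obtain ⟨⟨hchain, -⟩, hlen⟩ := hD.facesP_cyc c hcP
    refine (existsUnique_congr fun a => ?_).1 <| existsUnique_mem_onArc (l := c.reverse)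
      (f := fun a => emb.pos (D.tl a) - emb.ctrP c) (g := fun a => emb.pos (D.hd a) - emb.ctrP c)
      (by simpa using List.ne_nil_of_length_pos (by omega)) (by simpa using hα)
      (by simpa using hsum) (by simpa using emb.unitP c hcP) (by simpa using emb.arcP c hcP)
      (List.isChain_reverse.2 (hchain.imp fun a b h => by simp [h])) hw
    rw [List.mem_reverse, and_congr_right_iff]
    exact fun ha => (mem_posMatch_iff_of_mem_facesP hD emb θ hcP ha).symm
  · obtain ⟨⟨hchain, -⟩, hlen⟩ := hD.facesM_cyc c hcM
    refine (existsUnique_congr fun a => ?_).1 <| existsUnique_mem_onArc (l := c)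
      (f := fun a => emb.pos (D.hd a) - emb.ctrM c) (g := fun a => emb.pos (D.tl a) - emb.ctrM c)
      (List.ne_nil_of_length_pos (by omega)) hα hsum (fun a ha => emb.norm_hd_sub_ctrM hcM ha)
      (fun a ha => emb.tl_sub_ctrM hcM ha) (hchain.imp fun a b h => by simp [h])
      (by rwa [norm_neg])
    rw [and_congr_right_iff]
    exact fun ha => (mem_posMatch_iff_of_mem_facesM hD hpos hface emb θ hcM ha).symm
end
end
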